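/- arXiv:1304.0444 — 8 statements merged into one kernel-verified Lean document; each statement's English description precedes it below -/
import Mathlib

section
/- If P is a complex polynomial of degree n with all its zeros in the closed unit disk |z| ≤ 1, then for every R ≥ r ≥ 1 and every z with |z| = 1, one has |P(Rz)| ≥ ((R+1)/(r+1))^n · |P(rz)|. -/
/-!
Over `ℂ`, `|P(x)| = |a| ∏ |x - w|` with `w` running over the roots, so it suffices to compare one
factor at a time. Rotating `w` by `z⁻¹` reduces to `z = 1`, and for `|w| ≤ 1` the ratio
`|t - w| / (t + 1)` is nondecreasing on `t ≥ 1`: each factor grows at least by `(R + 1) / (r + 1)`.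
-/

open Polynomial Complex

theorem Polynomial.Splits.pow_natDegree_mul_norm_eval_le {K : Type*} [NormedField K]
    {P : K[X]} (hP : P.Splits) {c : ℝ} (hc : 0 ≤ c) {x y : K}
    (h : ∀ w ∈ P.roots, c * ‖x - w‖ ≤ ‖y - w‖) :
    c ^ P.natDegree * ‖P.eval x‖ ≤ ‖P.eval y‖ := by
  have hnorm : ∀ u : K, ‖P.eval u‖ = ‖P.leadingCoeff‖ * (P.roots.map (‖u - ·‖)).prod := fun u => by
    rw [hP.eval_eq_prod_roots, norm_mul]
    exact congrArg _ (P.roots.prod_hom' (normHom (α := K)) (u - ·)).symm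
  have hfactors :
      c ^ P.natDegree * (P.roots.map (‖x - ·‖)).prod ≤ (P.roots.map (‖y - ·‖)).prod := by
    rw [hP.natDegree_eq_card_roots, ← Multiset.prod_replicate, ← Multiset.map_const',
      ← Multiset.prod_map_mul]
    exact Multiset.prod_map_le_prod_map₀ _ _ (fun w _ => by positivity) h
  rw [hnorm, hnorm, mul_left_comm]
  exact mul_le_mul_of_nonneg_left hfactors (norm_nonneg _)

theorem Complex.add_one_mul_norm_ofReal_sub_le {r R : ℝ} (hr : 1 ≤ r) (hRr : r ≤ R) {w : ℂ}
    (hw : ‖w‖ ≤ 1) : (R + 1) * ‖(r : ℂ) - w‖ ≤ (r + 1) * ‖(R : ℂ) - w‖ := by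
  have hre : -1 ≤ w.re := by linarith [neg_abs_le w.re, abs_re_le_norm w]
  have hnormSq : w.re ^ 2 + w.im ^ 2 ≤ 1 := by
    have : ‖w‖ ^ 2 = w.re ^ 2 + w.im ^ 2 := by rw [Complex.sq_norm, normSq_apply]; ring
    nlinarith [norm_nonneg w]
  have hdist : ∀ t : ℝ, ‖(t : ℂ) - w‖ ^ 2 = (t - w.re) ^ 2 + w.im ^ 2 := fun t => by
    rw [Complex.sq_norm, normSq_apply]; simp only [sub_re, sub_im, ofReal_re, ofReal_im]; ring
  have hsq : ((R + 1) * ‖(r : ℂ) - w‖) ^ 2 ≤ ((r + 1) * ‖(R : ℂ) - w‖) ^ 2 := by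
    rw [mul_pow, mul_pow, hdist, hdist]
    -- the difference of the two sides is `(R - r) (2 (1 + Re w) (r R - 1) + (1 - |w|²) (R + r + 2))`
    linarith [mul_nonneg (sub_nonneg.2 hRr) (mul_nonneg (neg_le_iff_add_nonneg'.1 hre)
        (sub_nonneg.2 (one_le_mul_of_one_le_of_one_le hr (hr.trans hRr)))),
      mul_nonneg (sub_nonneg.2 hRr) (mul_nonneg (sub_nonneg.2 hnormSq)
        (by linarith : (0 : ℝ) ≤ R + r + 2))]
  exact (pow_le_pow_iff_left₀ (mul_nonneg (by linarith) (norm_nonneg _))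
    (mul_nonneg (by linarith) (norm_nonneg _)) two_ne_zero).1 hsq

theorem Complex.div_add_one_mul_norm_ofReal_mul_sub_le {r R : ℝ} (hr : 1 ≤ r) (hRr : r ≤ R)
    {z w : ℂ} (hz : ‖z‖ = 1) (hw : ‖w‖ ≤ 1) :
    (R + 1) / (r + 1) * ‖(r : ℂ) * z - w‖ ≤ ‖(R : ℂ) * z - w‖ := by
  have hz0 : z ≠ 0 := norm_ne_zero_iff.1 (by rw [hz]; exact one_ne_zero)
  have hrotate : ∀ t : ℝ, ‖(t : ℂ) * z - w‖ = ‖(t : ℂ) - w / z‖ := fun t => by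
    rw [← mul_one ‖(t : ℂ) - w / z‖, ← hz, ← norm_mul, sub_mul, div_mul_cancel₀ w hz0]
  have hwz : ‖w / z‖ ≤ 1 := by rwa [norm_div, hz, div_one]
  rw [hrotate, hrotate, div_mul_eq_mul_div, div_le_iff₀ (by linarith), mul_comm _ (r + 1)]
  exact add_one_mul_norm_ofReal_sub_le hr hRr hwz

theorem stmt_0 (P : Polynomial ℂ) (n : ℕ) (hdeg : P.natDegree = n)
    (hroots : ∀ w : ℂ, P.eval w = 0 → ‖w‖ ≤ 1)
    (R r : ℝ) (hr : 1 ≤ r) (hRr : r ≤ R) (z : ℂ) (hz : ‖z‖ = 1) :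
    ((R + 1) / (r + 1)) ^ n * ‖P.eval ((r : ℂ) * z)‖ ≤
      ‖P.eval ((R : ℂ) * z)‖ := by
  rw [← hdeg]
  refine (IsAlgClosed.splits P).pow_natDegree_mul_norm_eval_le
    (div_nonneg (by linarith) (by linarith)) fun w hw => ?_
  exact div_add_one_mul_norm_ofReal_mul_sub_le hr hRr hz (hroots w (isRoot_of_mem_roots hw))
end

section
/- If A, B, C are non-negative real numbers with B + C ≤ A, then for every real number γ, |(A − C)·e^{iγ} + (B + C)| ≤ |A·e^{iγ} + B|. -/
open Complex

theorem normSq_ofReal_mul_add_ofReal {z : ℂ} (hz : ‖z‖ = 1) (a b : ℝ) :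
    normSq (a * z + b) = a ^ 2 + b ^ 2 + 2 * a * b * z.re := by
  have hz' : z.re ^ 2 + z.im ^ 2 = 1 := by
    rw [← Complex.sq_norm_sub_sq_re, hz]; ring
  simp only [normSq_apply, add_re, add_im, mul_re, mul_im, ofReal_re, ofReal_im]
  linear_combination a ^ 2 * hz'

/-- Moving `c` from the rotated term to the fixed one shrinks the squared modulus by
`2 c (a - b - c) (1 - Re z)`. -/
theorem norm_sub_mul_add_add_le {z : ℂ} (hz : ‖z‖ = 1) {a b c : ℝ} (hc : 0 ≤ c)
    (hbc : b + c ≤ a) :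
    ‖((a : ℂ) - c) * z + ((b : ℂ) + c)‖ ≤ ‖(a : ℂ) * z + b‖ := by
  have hre : z.re ≤ 1 := hz ▸ re_le_norm z
  rw [norm_def, norm_def]
  apply Real.sqrt_le_sqrt
  have key := normSq_ofReal_mul_add_ofReal hz (a - c) (b + c)
  push_cast at key
  rw [key, normSq_ofReal_mul_add_ofReal hz]
  linarith [mul_nonneg (mul_nonneg hc (sub_nonneg.2 hbc)) (sub_nonneg.2 hre)]

theorem stmt_1_general (A B C : ℝ) (hC : 0 ≤ C)
    (hBC : B + C ≤ A) (γ : ℝ) :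
    ‖((A : ℂ) - C) * Complex.exp (γ * Complex.I) + ((B : ℂ) + C)‖ ≤
      ‖(A : ℂ) * Complex.exp (γ * Complex.I) + B‖ :=
  norm_sub_mul_add_add_le (norm_exp_ofReal_mul_I γ) hC hBC

theorem stmt_1 (A B C : ℝ) (hA : 0 ≤ A) (hB : 0 ≤ B) (hC : 0 ≤ C)
    (hBC : B + C ≤ A) (γ : ℝ) :
    ‖((A : ℂ) - C) * Complex.exp (γ * Complex.I) + ((B : ℂ) + C)‖ ≤
      ‖(A : ℂ) * Complex.exp (γ * Complex.I) + B‖ :=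
  stmt_1_general A B C hC hBC γ
end

section
/- Let f be a complex polynomial of degree n all of whose zeros lie in the closed unit disk, with at least one zero in the open unit disk. Then for every R > r ≥ 1 and every θ ∈ [0, 2π), |f(Re^{iθ})| > ((R+1)/(r+1))^n · |f(re^{iθ})|. -/
/-!
Factor `f = c ∏ (X - a)` over its roots. For `‖z‖ = 1` and a root `a`, the identity
`(r + 1) (R z - a) = (R + 1) (r z - a) + (R - r) (z + a)` together with
`Re ((r z - a) · conj (z + a)) ≥ (1 - ‖a‖) (r + ‖a‖) ≥ 0` shows that adding the second summand
cannot shorten the first, i.e. `‖R z - a‖ ≥ (R + 1) / (r + 1) · ‖r z - a‖`, strictly when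
`‖a‖ < 1`. Multiplying over the `n` roots gives the theorem.
-/

open Polynomial Complex ComplexConjugate

theorem Multiset.prod_map_lt_prod_map_of_exists_lt {R : Type*} [CommSemiring R]
    [PartialOrder R] [IsStrictOrderedRing R] {ι : Type*} {s : Multiset ι}
    {f g : ι → R} (hf : ∀ i ∈ s, 0 ≤ f i) (hg : ∀ i ∈ s, 0 < g i) (hle : ∀ i ∈ s, f i ≤ g i)
    (hlt : ∃ i ∈ s, f i < g i) : (s.map f).prod < (s.map g).prod := by
  obtain ⟨i, hi, hfg⟩ := hlt
  obtain ⟨t, rfl⟩ := Multiset.exists_cons_of_mem hi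
  simp only [Multiset.map_cons, Multiset.prod_cons]
  have htf : ∀ j ∈ t, 0 ≤ f j := fun j hj ↦ hf j (Multiset.mem_cons_of_mem hj)
  refine mul_lt_mul_of_lt_of_le_of_nonneg_of_pos hfg
    (Multiset.prod_map_le_prod_map₀ f g htf fun j hj ↦ hle j (Multiset.mem_cons_of_mem hj))
    (hf i hi) (Multiset.prod_pos fun x hx ↦ ?_)
  obtain ⟨j, hj, rfl⟩ := Multiset.mem_map.mp hx
  exact hg j (Multiset.mem_cons_of_mem hj)

theorem Polynomial.Splits.norm_eval_eq_prod_roots {K : Type*} [NormedField K] {f : K[X]}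
    (hf : f.Splits) (x : K) :
    ‖f.eval x‖ = ‖f.leadingCoeff‖ * (f.roots.map fun a ↦ ‖x - a‖).prod := by
  rw [hf.eval_eq_prod_roots, norm_mul]
  congr 1
  rw [← normHom_apply, map_multiset_prod, Multiset.map_map]
  rfl

theorem one_sub_norm_mul_add_norm_le_re {r : ℝ} (hr : 1 ≤ r) {z : ℂ} (hz : ‖z‖ = 1) (a : ℂ) :
    (1 - ‖a‖) * (r + ‖a‖) ≤ ((r * z - a) * conj (z + a)).re := by
  have hzz : z * conj z = 1 := by rw [mul_conj, normSq_eq_norm_sq, hz]; norm_num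
  have hexpand : (r * z - a) * conj (z + a) =
      r + (r - 1) * (z * conj a) + (z * conj a - conj (z * conj a)) - a * conj a := by
    simp only [map_add, map_mul, conj_conj]
    linear_combination r * hzz
  have hre : ((r * z - a) * conj (z + a)).re = r + (r - 1) * (z * conj a).re - ‖a‖ ^ 2 := by
    rw [hexpand]
    simp [mul_conj, normSq_eq_norm_sq, -ofReal_pow]
  have hbound : -‖a‖ ≤ (z * conj a).re := by
    have := abs_re_le_norm (z * conj a)
    rw [norm_mul, hz, norm_conj, one_mul] at this
    exact neg_le_of_abs_le this
  rw [hre]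
  nlinarith

theorem sq_mul_norm_sub_add_le {r R : ℝ} (hr : 1 ≤ r) (hrR : r ≤ R) {z : ℂ} (hz : ‖z‖ = 1)
    (a : ℂ) :
    ((R + 1) * ‖r * z - a‖) ^ 2 + 2 * ((R + 1) * (R - r)) * ((1 - ‖a‖) * (r + ‖a‖)) ≤
      ((r + 1) * ‖R * z - a‖) ^ 2 := by
  set p : ℂ := (R + 1 : ℝ) * (r * z - a)
  set q : ℂ := (R - r : ℝ) * (z + a)
  have hdecomp : ((r + 1 : ℝ) : ℂ) * (R * z - a) = p + q := by push_cast [p, q]; ring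
  have hcross : (p * conj q).re = (R + 1) * (R - r) * ((r * z - a) * conj (z + a)).re := by
    rw [map_mul, conj_ofReal, mul_mul_mul_comm, ← ofReal_mul, re_ofReal_mul]
  have hnorm : ((r + 1) * ‖R * z - a‖) ^ 2 = ‖p‖ ^ 2 + ‖q‖ ^ 2 + 2 * (p * conj q).re := by
    rw [Complex.sq_norm, Complex.sq_norm, ← normSq_add, ← hdecomp, normSq_eq_norm_sq,
      norm_mul, norm_real, Real.norm_of_nonneg (by linarith)]
  have hp : ‖p‖ = (R + 1) * ‖r * z - a‖ := by
    rw [norm_mul, norm_real, Real.norm_of_nonneg (by linarith)]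
  rw [hnorm, hcross, hp]
  nlinarith [one_sub_norm_mul_add_norm_le_re hr hz a, sq_nonneg ‖q‖,
    mul_nonneg (by linarith : (0 : ℝ) ≤ R + 1) (sub_nonneg.2 hrR)]

theorem div_mul_norm_sub_le {r R : ℝ} (hr : 1 ≤ r) (hrR : r ≤ R) {z a : ℂ} (hz : ‖z‖ = 1)
    (ha : ‖a‖ ≤ 1) : (R + 1) / (r + 1) * ‖r * z - a‖ ≤ ‖R * z - a‖ := by
  rw [div_mul_eq_mul_div, div_le_iff₀' (by linarith),
    ← sq_le_sq₀ (mul_nonneg (by linarith) (norm_nonneg _))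
      (mul_nonneg (by linarith) (norm_nonneg _))]
  have hgap : 0 ≤ 2 * ((R + 1) * (R - r)) * ((1 - ‖a‖) * (r + ‖a‖)) :=
    mul_nonneg (mul_nonneg zero_le_two (mul_nonneg (by linarith) (by linarith)))
      (mul_nonneg (by linarith) (by positivity))
  linarith [sq_mul_norm_sub_add_le hr hrR hz a]

theorem div_mul_norm_sub_lt {r R : ℝ} (hr : 1 ≤ r) (hrR : r < R) {z a : ℂ} (hz : ‖z‖ = 1)
    (ha : ‖a‖ < 1) : (R + 1) / (r + 1) * ‖r * z - a‖ < ‖R * z - a‖ := by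
  rw [div_mul_eq_mul_div, div_lt_iff₀' (by linarith),
    ← sq_lt_sq₀ (mul_nonneg (by linarith) (norm_nonneg _))
      (mul_nonneg (by linarith) (norm_nonneg _))]
  have hgap : 0 < 2 * ((R + 1) * (R - r)) * ((1 - ‖a‖) * (r + ‖a‖)) :=
    mul_pos (mul_pos two_pos (mul_pos (by linarith) (by linarith)))
      (mul_pos (by linarith) (by positivity))
  linarith [sq_mul_norm_sub_add_le hr hrR.le hz a]

theorem stmt_3_general (f : Polynomial ℂ) (n : ℕ) (hdeg : f.natDegree = n)
    (hroots : ∀ w : ℂ, f.eval w = 0 → ‖w‖ ≤ 1)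
    (hinner : ∃ w : ℂ, f.eval w = 0 ∧ ‖w‖ < 1)
    (R r : ℝ) (hr : 1 ≤ r) (hRr : r < R) (θ : ℝ) :
    ((R + 1) / (r + 1)) ^ n * ‖f.eval ((r : ℂ) * Complex.exp (θ * Complex.I))‖ <
      ‖f.eval ((R : ℂ) * Complex.exp (θ * Complex.I))‖ := by
  have hz := norm_exp_ofReal_mul_I θ
  have hf0 : f ≠ 0 := by
    rintro rfl
    simpa using hroots 2 eval_zero
  have hf : f.Splits := IsAlgClosed.splits f
  have hdisk : ∀ a ∈ f.roots, ‖a‖ ≤ 1 := fun a ha ↦ hroots a (isRoot_of_mem_roots ha)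
  obtain ⟨w, hw, hw1⟩ := hinner
  rw [hf.norm_eval_eq_prod_roots, hf.norm_eval_eq_prod_roots, ← hdeg, hf.natDegree_eq_card_roots,
    mul_left_comm, ← Multiset.prod_replicate, ← Multiset.map_const', ← Multiset.prod_map_mul]
  refine mul_lt_mul_of_pos_left (Multiset.prod_map_lt_prod_map_of_exists_lt ?_ ?_ ?_ ?_)
    (norm_pos_iff.2 (leadingCoeff_ne_zero.2 hf0))
  · exact fun a _ ↦ mul_nonneg (div_nonneg (by linarith) (by linarith)) (norm_nonneg _)
  · intro a ha
    have hRz : ‖(R : ℂ) * exp (θ * I)‖ = R := by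
      rw [norm_mul, hz, mul_one, norm_real, Real.norm_of_nonneg (by linarith)]
    linarith [norm_sub_norm_le ((R : ℂ) * exp (θ * I)) a, hdisk a ha]
  · exact fun a ha ↦ div_mul_norm_sub_le hr hRr.le hz (hdisk a ha)
  · exact ⟨w, (mem_roots hf0).2 hw, div_mul_norm_sub_lt hr hRr hz hw1⟩

theorem stmt_3 (f : Polynomial ℂ) (n : ℕ) (hdeg : f.natDegree = n)
    (hroots : ∀ w : ℂ, f.eval w = 0 → ‖w‖ ≤ 1)
    (hinner : ∃ w : ℂ, f.eval w = 0 ∧ ‖w‖ < 1)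
    (R r : ℝ) (hr : 1 ≤ r) (hRr : r < R) (θ : ℝ) (hθ0 : 0 ≤ θ) (hθ : θ < 2 * Real.pi) :
    ((R + 1) / (r + 1)) ^ n * ‖f.eval ((r : ℂ) * Complex.exp (θ * Complex.I))‖ <
      ‖f.eval ((R : ℂ) * Complex.exp (θ * Complex.I))‖ :=
  stmt_3_general f n hdeg hroots hinner R r hr hRr θ
end

section
/- Let f be a complex polynomial of degree n, all of whose zeros lie in the closed unit disk with at least one zero strictly inside. Then for every complex α with |α| ≤ 1 and every R > r ≥ 1, for all z with |z| = 1: |f(Rz) − α f(rz)| > (((R+1)/(r+1))^n − |α|) · |f(rz)|. -/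
open Polynomial Complex

/-! Write `f = c ∏ (X - a)` over its roots. For a root with `‖a‖ ≤ 1` and `‖z‖ = 1`, each factor
satisfies `(R + 1) ‖r z - a‖ ≤ (r + 1) ‖R z - a‖`, strictly when `‖a‖ < 1`: the difference of the
squares factors as `(R - r) ((1 - ‖a‖²) (R + r + 2) + 2 (r R - 1) (1 + Re (z a̅)))`, a product of
nonnegative terms. Multiplying over the roots gives `((R + 1) / (r + 1)) ^ n ‖f (r z)‖ < ‖f (R z)‖`,
and the triangle inequality absorbs `α f (r z)`. -/

open ComplexConjugate

namespace Multiset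

theorem pow_card_mul_prod_map {R ι : Type*} [CommMonoid R] (s : Multiset ι) (c : R)
    (g : ι → R) :
    c ^ card s * (s.map g).prod = (s.map fun i ↦ c * g i).prod := by
  rw [prod_map_mul, map_const', prod_replicate]

theorem prod_map_lt_prod_map₀ {R ι : Type*}
    [CommSemiring R] [PartialOrder R] [IsStrictOrderedRing R]
    {s : Multiset ι} (f g : ι → R) (h0 : ∀ i ∈ s, 0 ≤ f i) (hg : ∀ i ∈ s, 0 < g i)
    (hle : ∀ i ∈ s, f i ≤ g i) (hlt : ∃ i ∈ s, f i < g i) :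
    (s.map f).prod < (s.map g).prod := by
  obtain ⟨i, hi, hfg⟩ := hlt
  obtain ⟨t, rfl⟩ := exists_cons_of_mem hi
  rw [map_cons, map_cons, prod_cons, prod_cons]
  refine mul_lt_mul_of_lt_of_le_of_nonneg_of_pos hfg ?_ (h0 i hi) ?_
  · exact prod_map_le_prod_map₀ f g (fun j hj ↦ h0 j (mem_cons_of_mem hj))
      fun j hj ↦ hle j (mem_cons_of_mem hj)
  · refine prod_pos fun x hx ↦ ?_
    obtain ⟨j, hj, rfl⟩ := mem_map.1 hx
    exact hg j (mem_cons_of_mem hj)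

end Multiset

theorem norm_ofReal_mul_sub_sq {z : ℂ} (hz : ‖z‖ = 1) (t : ℝ) (a : ℂ) :
    ‖(t : ℂ) * z - a‖ ^ 2 = t ^ 2 - 2 * t * (z * conj a).re + ‖a‖ ^ 2 := by
  rw [Complex.sq_norm, Complex.sq_norm, normSq_sub, normSq_mul, normSq_ofReal, ← Complex.sq_norm z,
    hz, mul_assoc (t : ℂ), re_ofReal_mul]
  ring

theorem sq_add_one_mul_norm_sub_sub {z : ℂ} (hz : ‖z‖ = 1) (r R : ℝ) (a : ℂ) :
    (r + 1) ^ 2 * ‖(R : ℂ) * z - a‖ ^ 2 - (R + 1) ^ 2 * ‖(r : ℂ) * z - a‖ ^ 2 =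
      (R - r) * ((1 - ‖a‖ ^ 2) * (R + r + 2) + 2 * (r * R - 1) * (1 + (z * conj a).re)) := by
  rw [norm_ofReal_mul_sub_sq hz, norm_ofReal_mul_sub_sq hz]
  ring

theorem neg_norm_le_re_mul_conj {z : ℂ} (hz : ‖z‖ = 1) (a : ℂ) : -‖a‖ ≤ (z * conj a).re := by
  have hre := abs_re_le_norm (z * conj a)
  rw [norm_mul, norm_conj, hz, one_mul] at hre
  linarith [neg_abs_le (z * conj a).re]

theorem add_one_mul_norm_ofReal_mul_sub_le {z a : ℂ} {r R : ℝ} (hz : ‖z‖ = 1) (ha : ‖a‖ ≤ 1)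
    (hr : 1 ≤ r) (hrR : r ≤ R) :
    (R + 1) * ‖(r : ℂ) * z - a‖ ≤ (r + 1) * ‖(R : ℂ) * z - a‖ := by
  have hre := neg_norm_le_re_mul_conj hz a
  have hdiff :
      0 ≤ (R - r) * ((1 - ‖a‖ ^ 2) * (R + r + 2) + 2 * (r * R - 1) * (1 + (z * conj a).re)) :=
    mul_nonneg (by linarith) (add_nonneg (mul_nonneg (by nlinarith [norm_nonneg a]) (by linarith))
      (mul_nonneg (by nlinarith) (by linarith)))
  rw [← pow_le_pow_iff_left₀ (mul_nonneg (by linarith) (norm_nonneg _))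
    (mul_nonneg (by linarith) (norm_nonneg _)) two_ne_zero, mul_pow, mul_pow]
  linarith [sq_add_one_mul_norm_sub_sub hz r R a]

theorem add_one_mul_norm_ofReal_mul_sub_lt {z a : ℂ} {r R : ℝ} (hz : ‖z‖ = 1) (ha : ‖a‖ < 1)
    (hr : 1 ≤ r) (hrR : r < R) :
    (R + 1) * ‖(r : ℂ) * z - a‖ < (r + 1) * ‖(R : ℂ) * z - a‖ := by
  have hre := neg_norm_le_re_mul_conj hz a
  have hdiff :
      0 < (R - r) * ((1 - ‖a‖ ^ 2) * (R + r + 2) + 2 * (r * R - 1) * (1 + (z * conj a).re)) :=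
    mul_pos (by linarith) (add_pos_of_pos_of_nonneg
      (mul_pos (by nlinarith [norm_nonneg a]) (by linarith))
      (mul_nonneg (by nlinarith) (by linarith)))
  rw [← pow_lt_pow_iff_left₀ (mul_nonneg (by linarith) (norm_nonneg _))
    (mul_nonneg (by linarith) (norm_nonneg _)) two_ne_zero, mul_pow, mul_pow]
  linarith [sq_add_one_mul_norm_sub_sub hz r R a]

theorem Polynomial.norm_eval_eq_norm_leadingCoeff_mul_prod_roots (f : ℂ[X]) (x : ℂ) :
    ‖f.eval x‖ = ‖f.leadingCoeff‖ * (f.roots.map fun a ↦ ‖x - a‖).prod := by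
  conv_lhs =>
    rw [← C_leadingCoeff_mul_prod_multiset_X_sub_C (p := f) IsAlgClosed.card_roots_eq_natDegree]
  rw [eval_mul, eval_C, eval_multiset_prod, norm_mul]
  congr 1
  simpa [Multiset.map_map, Function.comp_def] using
    map_multiset_prod (normHom : ℂ →*₀ ℝ) (f.roots.map fun a ↦ x - a)

theorem Polynomial.add_one_pow_mul_norm_eval_lt {f : ℂ[X]}
    (hroots : ∀ w : ℂ, f.eval w = 0 → ‖w‖ ≤ 1) (hinner : ∃ w : ℂ, f.eval w = 0 ∧ ‖w‖ < 1)
    {r R : ℝ} (hr : 1 ≤ r) (hRr : r < R) {z : ℂ} (hz : ‖z‖ = 1) :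
    (R + 1) ^ f.natDegree * ‖f.eval ((r : ℂ) * z)‖ <
      (r + 1) ^ f.natDegree * ‖f.eval ((R : ℂ) * z)‖ := by
  have hf : f ≠ 0 := by
    rintro rfl
    have := hroots 2 eval_zero
    norm_num at this
  have hRz : ‖(R : ℂ) * z‖ = R := by
    rw [norm_mul, hz, mul_one, norm_real, Real.norm_of_nonneg (by linarith)]
  obtain ⟨w, hw, hw1⟩ := hinner
  simp only [norm_eval_eq_norm_leadingCoeff_mul_prod_roots, mul_left_comm _ ‖f.leadingCoeff‖,
    ← IsAlgClosed.card_roots_eq_natDegree, Multiset.pow_card_mul_prod_map]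
  refine mul_lt_mul_of_pos_left (Multiset.prod_map_lt_prod_map₀ _ _ ?_ ?_ ?_ ?_)
    (norm_pos_iff.2 (leadingCoeff_ne_zero.2 hf))
  · exact fun a _ ↦ mul_nonneg (by linarith) (norm_nonneg _)
  · refine fun a ha ↦ mul_pos (by linarith) (norm_pos_iff.2 (sub_ne_zero.2 fun h ↦ ?_))
    have := hroots a (isRoot_of_mem_roots ha)
    rw [← h, hRz] at this
    linarith
  · exact fun a ha ↦ add_one_mul_norm_ofReal_mul_sub_le hz (hroots a (isRoot_of_mem_roots ha))
      hr hRr.le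
  · exact ⟨w, (mem_roots hf).2 hw, add_one_mul_norm_ofReal_mul_sub_lt hz hw1 hr hRr⟩

theorem stmt_4_general (f : Polynomial ℂ) (n : ℕ) (hdeg : f.natDegree = n)
    (hroots : ∀ w : ℂ, f.eval w = 0 → ‖w‖ ≤ 1)
    (hinner : ∃ w : ℂ, f.eval w = 0 ∧ ‖w‖ < 1)
    (α : ℂ)
    (R r : ℝ) (hr : 1 ≤ r) (hRr : r < R) (z : ℂ) (hz : ‖z‖ = 1) :
    (((R + 1) / (r + 1)) ^ n - ‖α‖) * ‖f.eval ((r : ℂ) * z)‖ <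
      ‖f.eval ((R : ℂ) * z) - α * f.eval ((r : ℂ) * z)‖ := by
  subst hdeg
  have hgrowth : ((R + 1) / (r + 1)) ^ f.natDegree * ‖f.eval ((r : ℂ) * z)‖ <
      ‖f.eval ((R : ℂ) * z)‖ := by
    rw [div_pow, div_mul_eq_mul_div, div_lt_iff₀ (by positivity), mul_comm _ ((r + 1) ^ _)]
    exact add_one_pow_mul_norm_eval_lt hroots hinner hr hRr hz
  have htriangle := norm_sub_norm_le (f.eval ((R : ℂ) * z)) (α * f.eval ((r : ℂ) * z))
  rw [norm_mul] at htriangle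
  linarith

theorem stmt_4 (f : Polynomial ℂ) (n : ℕ) (hdeg : f.natDegree = n)
    (hroots : ∀ w : ℂ, f.eval w = 0 → ‖w‖ ≤ 1)
    (hinner : ∃ w : ℂ, f.eval w = 0 ∧ ‖w‖ < 1)
    (α : ℂ) (hα : ‖α‖ ≤ 1)
    (R r : ℝ) (hr : 1 ≤ r) (hRr : r < R) (z : ℂ) (hz : ‖z‖ = 1) :
    (((R + 1) / (r + 1)) ^ n - ‖α‖) * ‖f.eval ((r : ℂ) * z)‖ <
      ‖f.eval ((R : ℂ) * z) - α * f.eval ((r : ℂ) * z)‖ :=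
  stmt_4_general f n hdeg hroots hinner α R r hr hRr z hz
end

section
/- Let P be a complex polynomial of degree n with no zeros in the open unit disk, and let m = min_{|z|=1} |P(z)|. Then for every complex λ with |λ| < 1, the polynomial P(z) + λm has no zeros in the open unit disk. -/
/-! Minimum modulus principle: `1 / P` is holomorphic on the disk and continuous up to the circle,
so by the maximum modulus principle `|P| ≥ m` throughout the disk. A zero of `P + λ m` would give
`|P(z)| = |λ| m < m` (and `P(z) = 0` when `m = 0`). -/

open Complex Metric

theorem Complex.le_norm_of_forall_mem_frontier_le_norm {E : Type*} [NormedAddCommGroup E]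
    [NormedSpace ℂ E] [Nontrivial E] {f : E → ℂ} {U : Set E} (hU : Bornology.IsBounded U)
    (hd : DiffContOnCl ℂ f U)
    (hne : ∀ z ∈ U, f z ≠ 0) {m : ℝ} (hm : ∀ z ∈ frontier U, m ≤ ‖f z‖) {z : E}
    (hz : z ∈ closure U) : m ≤ ‖f z‖ := by
  rcases le_or_gt m 0 with hm0 | hm0
  · exact hm0.trans (norm_nonneg _)
  have hne_closure : ∀ w ∈ closure U, f w ≠ 0 := by
    rw [closure_eq_self_union_frontier]
    rintro w (hw | hw)
    · exact hne w hw
    · exact norm_pos_iff.mp (hm0.trans_le (hm w hw))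
  have hinv : ‖(f z)⁻¹‖ ≤ m⁻¹ :=
    norm_le_of_forall_mem_frontier_norm_le hU (hd.inv hne_closure)
      (fun w hw => by rw [Pi.inv_apply, norm_inv]; exact inv_anti₀ hm0 (hm w hw)) hz
  rwa [norm_inv, inv_le_inv₀ (norm_pos_iff.mpr (hne_closure z hz)) hm0] at hinv

theorem stmt_7_general (P : Polynomial ℂ)
    (hnz : ∀ z : ℂ, ‖z‖ < 1 → P.eval z ≠ 0)
    (m : ℝ)
    (hm : IsLeast ((fun z : ℂ => ‖P.eval z‖) '' {z : ℂ | ‖z‖ = 1}) m)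
    (lam : ℂ) (hlam : ‖lam‖ < 1) :
    ∀ z : ℂ, ‖z‖ < 1 → P.eval z + lam * m ≠ 0 := by
  intro z hz hzero
  have hmin : m ≤ ‖P.eval z‖ := by
    refine le_norm_of_forall_mem_frontier_le_norm isBounded_ball
      P.differentiable.diffContOnCl (fun w hw => hnz w (mem_ball_zero_iff.mp hw)) ?_
      (subset_closure (mem_ball_zero_iff.mpr hz))
    rw [frontier_ball 0 one_ne_zero]
    exact fun w hw => hm.2 ⟨w, mem_sphere_zero_iff_norm.mp hw, rfl⟩
  have hm0 : 0 ≤ m := by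
    obtain ⟨w, -, hw⟩ := hm.1
    exact hw ▸ norm_nonneg _
  have hPz : ‖P.eval z‖ = ‖lam‖ * m := by
    rw [eq_neg_of_add_eq_zero_left hzero, norm_neg, norm_mul, norm_real, Real.norm_of_nonneg hm0]
  have hpos : 0 < ‖P.eval z‖ := norm_pos_iff.mpr (hnz z hz)
  nlinarith [norm_nonneg lam]

theorem stmt_7 (P : Polynomial ℂ) (n : ℕ) (hdeg : P.natDegree = n)
    (hnz : ∀ z : ℂ, ‖z‖ < 1 → P.eval z ≠ 0)
    (m : ℝ)
    (hm : IsLeast ((fun z : ℂ => ‖P.eval z‖) '' {z : ℂ | ‖z‖ = 1}) m)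
    (lam : ℂ) (hlam : ‖lam‖ < 1) :
    ∀ z : ℂ, ‖z‖ < 1 → P.eval z + lam * m ≠ 0 :=
  stmt_7_general P hnz m hm lam hlam
end

section
/- Let P be a complex polynomial of degree n with all zeros in the open unit disk, and m = min_{|z|=1} |P(z)|. Then m·|z|^n ≤ |P(z)| for all |z| ≥ 1. -/
/-!
Let `Q` be the reverse of `P`, so that `P z = z ^ n * Q (1 / z)`. Since the zeros of `P` lie in the
open unit disk, `Q` has no zeros in the closed unit disk, and `|Q| = |P|` on the unit circle. The
minimum modulus principle (the maximum modulus principle for `1 / Q`) gives `m ≤ |Q u|` for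
`|u| ≤ 1`, which is the claim after substituting `u = 1 / z`.
-/

open Polynomial Complex Metric

namespace Polynomial

theorem eval_reverse_inv_mul_pow {K : Type*} [Field K] (P : K[X]) {z : K} (hz : z ≠ 0) :
    P.reverse.eval z⁻¹ * z ^ P.natDegree = P.eval z := by
  have : Invertible z := invertibleOfNonzero hz
  simpa only [invOf_eq_inv, eval₂_id] using eval₂_reverse_mul_pow (RingHom.id K) z P

variable {K : Type*} [NormedField K]

theorem norm_eval_eq_norm_eval_reverse_inv_mul (P : K[X]) {z : K} (hz : z ≠ 0) :
    ‖P.eval z‖ = ‖P.reverse.eval z⁻¹‖ * ‖z‖ ^ P.natDegree := by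
  rw [← P.eval_reverse_inv_mul_pow hz, norm_mul, norm_pow]

theorem eval_reverse_ne_zero_of_norm_le_one {P : K[X]} (hP : P ≠ 0)
    (hroots : ∀ w : K, P.eval w = 0 → ‖w‖ < 1) {u : K} (hu : ‖u‖ ≤ 1) :
    P.reverse.eval u ≠ 0 := by
  intro hQu
  rcases eq_or_ne u 0 with rfl | hu0
  · rw [← coeff_zero_eq_eval_zero, coeff_zero_reverse, leadingCoeff_eq_zero] at hQu
    exact hP hQu
  · have hP0 : P.eval u⁻¹ = 0 := by
      rw [← P.eval_reverse_inv_mul_pow (inv_ne_zero hu0), inv_inv, hQu, zero_mul]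
    have := hroots _ hP0
    rw [norm_inv, inv_lt_one₀ (norm_pos_iff.mpr hu0)] at this
    linarith

end Polynomial

namespace Complex

variable {E : Type*} [NormedAddCommGroup E] [NormedSpace ℂ E] [Nontrivial E]

theorem le_norm_of_forall_mem_frontier_le_norm_s9 {f : E → ℂ} {U : Set E} (hU : Bornology.IsBounded U)
    (hd : DiffContOnCl ℂ f U) (hf : ∀ z ∈ closure U, f z ≠ 0) {C : ℝ}
    (hC : ∀ z ∈ frontier U, C ≤ ‖f z‖) {z : E} (hz : z ∈ closure U) : C ≤ ‖f z‖ := by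
  rcases le_or_gt C 0 with hC0 | hC0
  · exact hC0.trans (norm_nonneg _)
  have hinv : ‖(f z)⁻¹‖ ≤ C⁻¹ :=
    norm_le_of_forall_mem_frontier_norm_le hU (hd.inv hf)
      (fun w hw => by rw [Pi.inv_apply, norm_inv]; exact inv_anti₀ hC0 (hC w hw)) hz
  rw [norm_inv] at hinv
  exact (inv_le_inv₀ (norm_pos_iff.mpr (hf z hz)) hC0).mp hinv

end Complex

theorem stmt_9 (P : Polynomial ℂ) (n : ℕ) (hdeg : P.natDegree = n)
    (hroots : ∀ w : ℂ, P.eval w = 0 → ‖w‖ < 1)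
    (m : ℝ)
    (hm : IsLeast ((fun z : ℂ => ‖P.eval z‖) '' {z : ℂ | ‖z‖ = 1}) m) :
    ∀ z : ℂ, 1 ≤ ‖z‖ → m * ‖z‖ ^ n ≤ ‖P.eval z‖ := by
  intro z hz
  have hP : P ≠ 0 := by
    rintro rfl
    simpa using hroots 1 eval_zero
  have hboundary : ∀ u ∈ frontier (ball (0 : ℂ) 1), m ≤ ‖P.reverse.eval u‖ := by
    intro u hu
    rw [frontier_ball _ one_ne_zero, mem_sphere_zero_iff_norm] at hu
    have hu0 : u⁻¹ ≠ 0 := inv_ne_zero (norm_ne_zero_iff.mp (by rw [hu]; exact one_ne_zero))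
    have : m ≤ ‖P.eval u⁻¹‖ := hm.2 ⟨u⁻¹, by simp [hu], rfl⟩
    rwa [P.norm_eval_eq_norm_eval_reverse_inv_mul hu0, inv_inv, norm_inv, hu, inv_one, one_pow,
      mul_one] at this
  have hdisk : ∀ u : ℂ, ‖u‖ ≤ 1 → m ≤ ‖P.reverse.eval u‖ := fun u hu =>
    le_norm_of_forall_mem_frontier_le_norm_s9 isBounded_ball P.reverse.differentiable.diffContOnCl
      (fun w hw => eval_reverse_ne_zero_of_norm_le_one hP hroots <| by
        rwa [closure_ball _ one_ne_zero, mem_closedBall_zero_iff] at hw)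
      hboundary (by rwa [closure_ball _ one_ne_zero, mem_closedBall_zero_iff])
  have hz0 : z ≠ 0 := norm_pos_iff.mp (one_pos.trans_le hz)
  calc m * ‖z‖ ^ n ≤ ‖P.reverse.eval z⁻¹‖ * ‖z‖ ^ n := by
        gcongr
        exact hdisk _ (by rw [norm_inv]; exact inv_le_one_of_one_le₀ hz)
    _ = ‖P.eval z‖ := by rw [P.norm_eval_eq_norm_eval_reverse_inv_mul hz0, hdeg]
end

section
/- Let P be a complex polynomial of degree n with no zeros in the open unit disk, and P* its conjugate-reverse polynomial. Then for every R > r ≥ 1 and α, β ∈ ℂ with |α| ≤ 1, |β| ≤ 1, setting φ = β(((R+1)/(r+1))^n − |α|) − α, for all |z| ≥ 1: |P(Rz) + φ P(rz)| ≤ |P*(Rz) + φ P*(rz)|. -/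
/-!
Put `K = ((R + 1) / (r + 1)) ^ n`. If `q` has degree `n` and all its zeros `a` in the closed unit
disk, then `(R + 1) |r z - a| ≤ (r + 1) |R z - a|` for `|z| ≥ 1`, so `|q(R z)| ≥ K |q(r z)|` and
`q(R z) + φ q(r z) ≠ 0` whenever `|φ| < K`. This applies to `P*`, whose zeros are the points
`1 / conj a` for the zeros `a` of `P`. If the inequality failed at `z`, the quotient `μ` of its two
sides would satisfy `|μ| > 1`; then `P - μ P*` has degree `n` (as `|a_n| ≤ |a_0|`) and no zeros
outside the closed disk (as `|P| ≤ |P*|` there), yet its combination `q(R z) + φ q(r z)` vanishes.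
Finally `|φ| ≤ K`, and the case `|φ| = K` follows by continuity in `φ`.
-/

open Polynomial Complex ComplexConjugate Metric

lemma norm_le_norm_add_of_re_mul_conj_nonneg {u v : ℂ} (h : 0 ≤ (u * conj v).re) :
    ‖u‖ ≤ ‖u + v‖ := by
  refine (sq_le_sq₀ (norm_nonneg _) (norm_nonneg _)).1 ?_
  rw [Complex.sq_norm, Complex.sq_norm, normSq_add]
  linarith [normSq_nonneg v]

lemma add_one_mul_norm_mul_sub_le {r R : ℝ} (hr : 1 ≤ r) (hrR : r ≤ R) {z y : ℂ}
    (hz : 1 ≤ ‖z‖) (hy : ‖y‖ ≤ 1) :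
    (R + 1) * ‖r * z - y‖ ≤ (r + 1) * ‖R * z - y‖ := by
  have hsplit : ((r + 1 : ℝ) : ℂ) * (R * z - y) =
      ((R + 1 : ℝ) : ℂ) * (r * z - y) + ((R - r : ℝ) : ℂ) * (z + y) := by
    push_cast; ring
  have hre : ((r * z - y) * conj (z + y)).re =
      r * ‖z‖ ^ 2 - ‖y‖ ^ 2 + (r - 1) * (z * conj y).re := by
    simp only [Complex.sq_norm, normSq_apply, mul_re, mul_im, sub_re, sub_im, add_re, add_im,
      conj_re, conj_im, ofReal_re, ofReal_im]
    ring
  have hcross : -(‖z‖ * ‖y‖) ≤ (z * conj y).re := by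
    have := (abs_le.1 (abs_re_le_norm (z * conj y))).1
    rwa [norm_mul, norm_conj] at this
  -- the real part is at least `r ‖z‖² - ‖y‖² - (r - 1) ‖z‖ ‖y‖ = (‖z‖ - ‖y‖) (r ‖z‖ + ‖y‖)`
  have hacute : 0 ≤ ((r * z - y) * conj (z + y)).re := by
    rw [hre]
    have hρm : 0 ≤ (‖z‖ - ‖y‖) * (r * ‖z‖ + ‖y‖) :=
      mul_nonneg (by linarith) (by positivity)
    nlinarith [mul_le_mul_of_nonneg_left hcross (sub_nonneg.2 hr)]
  have hacute' :
      0 ≤ (((R + 1 : ℝ) : ℂ) * (r * z - y) * conj (((R - r : ℝ) : ℂ) * (z + y))).re := by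
    rw [map_mul, conj_ofReal, mul_mul_mul_comm, ← ofReal_mul, re_ofReal_mul]
    exact mul_nonneg (mul_nonneg (by linarith) (by linarith)) hacute
  have := norm_le_norm_add_of_re_mul_conj_nonneg hacute'
  rwa [← hsplit, norm_mul, norm_mul, norm_real, norm_real, Real.norm_of_nonneg (by linarith),
    Real.norm_of_nonneg (by linarith)] at this

lemma norm_one_sub_conj_mul_sq (a w : ℂ) :
    ‖1 - conj a * w‖ ^ 2 = ‖w - a‖ ^ 2 + (‖a‖ ^ 2 - 1) * (‖w‖ ^ 2 - 1) := by
  simp only [Complex.sq_norm, normSq_apply, mul_re, mul_im, sub_re, sub_im, conj_re, conj_im,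
    one_re, one_im]
  ring

lemma norm_sub_le_norm_one_sub_conj_mul {a w : ℂ} (ha : 1 ≤ ‖a‖) (hw : 1 ≤ ‖w‖) :
    ‖w - a‖ ≤ ‖1 - conj a * w‖ := by
  refine (sq_le_sq₀ (norm_nonneg _) (norm_nonneg _)).1 ?_
  rw [norm_one_sub_conj_mul_sq]
  nlinarith [one_le_pow₀ (n := 2) ha, one_le_pow₀ (n := 2) hw]

lemma norm_eval_eq_mul_prod_roots (q : ℂ[X]) (w : ℂ) :
    ‖q.eval w‖ = ‖q.leadingCoeff‖ * (q.roots.map fun a => ‖w - a‖).prod := by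
  rw [(IsAlgClosed.splits q).eval_eq_prod_roots w, norm_mul]
  exact congrArg _ (Multiset.prod_hom' q.roots (normHom : ℂ →*₀ ℝ) (w - ·)).symm

lemma pow_mul_norm_eval_le_norm_eval {q : ℂ[X]} (hq : ∀ w : ℂ, 1 < ‖w‖ → q.eval w ≠ 0)
    {r R : ℝ} (hr : 1 ≤ r) (hrR : r ≤ R) {z : ℂ} (hz : 1 ≤ ‖z‖) :
    ((R + 1) / (r + 1)) ^ q.natDegree * ‖q.eval (r * z)‖ ≤ ‖q.eval (R * z)‖ := by
  have hr1 : 0 < r + 1 := by linarith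
  rw [norm_eval_eq_mul_prod_roots, norm_eval_eq_mul_prod_roots, mul_left_comm,
    ← IsAlgClosed.card_roots_eq_natDegree, ← Multiset.prod_replicate, ← Multiset.map_const',
    ← Multiset.prod_map_mul]
  gcongr
  refine Multiset.prod_map_le_prod_map₀ _ _
    (fun _ _ => mul_nonneg (div_nonneg (by linarith) hr1.le) (norm_nonneg _)) fun a ha => ?_
  rw [div_mul_eq_mul_div, div_le_iff₀ hr1, mul_comm _ (r + 1)]
  exact add_one_mul_norm_mul_sub_le hr hrR hz (not_lt.1 fun h => hq a h (isRoot_of_mem_roots ha))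

lemma eval_add_mul_eval_ne_zero {q : ℂ[X]} (hq : ∀ w : ℂ, 1 < ‖w‖ → q.eval w ≠ 0)
    {r R : ℝ} (hr : 1 ≤ r) (hrR : r < R) {z : ℂ} (hz : 1 ≤ ‖z‖) {φ : ℂ}
    (hφ : ‖φ‖ < ((R + 1) / (r + 1)) ^ q.natDegree) :
    q.eval (R * z) + φ * q.eval (r * z) ≠ 0 := by
  intro h0
  rcases eq_or_ne (q.eval (r * z)) 0 with hrz | hrz
  · refine hq _ ?_ (by simpa [hrz] using h0)
    rw [norm_mul, norm_real, Real.norm_of_nonneg (by linarith)]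
    nlinarith
  · have hRz : ‖q.eval (R * z)‖ = ‖φ‖ * ‖q.eval (r * z)‖ := by
      rw [eq_neg_of_add_eq_zero_left h0, norm_neg, norm_mul]
    have := mul_lt_mul_of_pos_right hφ (norm_pos_iff.2 hrz)
    linarith [pow_mul_norm_eval_le_norm_eval hq hr hrR.le hz]

noncomputable def conjReflect (n : ℕ) (P : ℂ[X]) : ℂ[X] :=
  reflect n (P.map (starRingEnd ℂ))

section conjReflect

variable {P : ℂ[X]} {n : ℕ}

lemma coeff_conjReflect_self : (conjReflect n P).coeff n = conj (P.coeff 0) := by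
  simp [conjReflect, coeff_reflect]

lemma natDegree_conjReflect_le (hdeg : P.natDegree ≤ n) : (conjReflect n P).natDegree ≤ n := by
  refine natDegree_le_iff_coeff_eq_zero.2 fun k hk => ?_
  rw [conjReflect, coeff_reflect, revAt_eq_self_of_lt hk]
  exact coeff_eq_zero_of_natDegree_lt ((natDegree_map_le).trans_lt (hdeg.trans_lt hk))

lemma eval_conjReflect_mul_inv_pow (hdeg : P.natDegree ≤ n) {w : ℂ} (hw : w ≠ 0) :
    (conjReflect n P).eval w * w⁻¹ ^ n = conj (P.eval (conj w⁻¹)) := by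
  have : Invertible w⁻¹ := invertibleOfNonzero (inv_ne_zero hw)
  have h := eval₂_reflect_mul_pow (RingHom.id ℂ) w⁻¹ n (P.map conj)
    (natDegree_map_le.trans hdeg)
  rw [invOf_eq_inv, inv_inv, eval₂_id, eval₂_id, eval_map] at h
  rw [conjReflect, h, ← eval₂_at_apply, conj_conj]

lemma norm_eval_conjReflect (hdeg : P.natDegree = n) {w : ℂ} (hw : w ≠ 0) :
    ‖(conjReflect n P).eval w‖ =
      ‖P.leadingCoeff‖ * (P.roots.map fun a => ‖1 - conj a * w‖).prod := by
  have key := congrArg norm (eval_conjReflect_mul_inv_pow hdeg.le hw)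
  rw [norm_mul, norm_pow, norm_inv, norm_conj] at key
  have hfactor : ∀ a : ℂ, ‖w‖ * ‖conj w⁻¹ - a‖ = ‖1 - conj a * w‖ := fun a => by
    rw [← norm_conj (1 - conj a * w), ← norm_conj w, ← norm_mul, map_inv₀, mul_sub,
      mul_inv_cancel₀ ((_root_.map_ne_zero _).2 hw)]
    simp [mul_comm]
  calc ‖(conjReflect n P).eval w‖
        = ‖w‖ ^ n * (‖(conjReflect n P).eval w‖ * ‖w‖⁻¹ ^ n) := by
        rw [mul_left_comm, ← mul_pow, mul_inv_cancel₀ (norm_ne_zero_iff.2 hw), one_pow, mul_one]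
    _ = ‖P.leadingCoeff‖ * (P.roots.map fun a => ‖w‖ * ‖conj w⁻¹ - a‖).prod := by
        rw [key, norm_eval_eq_mul_prod_roots, Multiset.prod_map_mul, Multiset.map_const',
          Multiset.prod_replicate, IsAlgClosed.card_roots_eq_natDegree, hdeg]
        ring
    _ = _ := by simp only [hfactor]

lemma one_le_norm_of_mem_roots (hP : ∀ z : ℂ, ‖z‖ < 1 → P.eval z ≠ 0) {a : ℂ}
    (ha : a ∈ P.roots) : 1 ≤ ‖a‖ :=
  not_lt.1 fun h => hP a h (isRoot_of_mem_roots ha)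

lemma eval_conjReflect_ne_zero (hdeg : P.natDegree ≤ n)
    (hP : ∀ z : ℂ, ‖z‖ < 1 → P.eval z ≠ 0) {w : ℂ} (hw : 1 < ‖w‖) :
    (conjReflect n P).eval w ≠ 0 := by
  have hw0 : w ≠ 0 := norm_pos_iff.1 (one_pos.trans hw)
  intro h
  have := eval_conjReflect_mul_inv_pow hdeg hw0
  rw [h, zero_mul, eq_comm, map_eq_zero] at this
  exact hP _ (by rwa [norm_conj, norm_inv, inv_lt_one₀ (one_pos.trans hw)]) this

lemma norm_eval_le_norm_eval_conjReflect (hdeg : P.natDegree = n)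
    (hP : ∀ z : ℂ, ‖z‖ < 1 → P.eval z ≠ 0) {w : ℂ} (hw : 1 ≤ ‖w‖) :
    ‖P.eval w‖ ≤ ‖(conjReflect n P).eval w‖ := by
  rw [norm_eval_eq_mul_prod_roots,
    norm_eval_conjReflect hdeg (norm_pos_iff.1 (one_pos.trans_le hw))]
  gcongr
  exact Multiset.prod_map_le_prod_map₀ _ _ (fun _ _ => norm_nonneg _)
    fun a ha => norm_sub_le_norm_one_sub_conj_mul (one_le_norm_of_mem_roots hP ha) hw

lemma coeff_zero_ne_zero_of_eval_ne_zero (hP : ∀ z : ℂ, ‖z‖ < 1 → P.eval z ≠ 0) :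
    P.coeff 0 ≠ 0 := by
  rw [coeff_zero_eq_eval_zero]
  exact hP 0 (by simp)

lemma norm_leadingCoeff_le_norm_coeff_zero (hP : ∀ z : ℂ, ‖z‖ < 1 → P.eval z ≠ 0) :
    ‖P.leadingCoeff‖ ≤ ‖P.coeff 0‖ := by
  rw [coeff_zero_eq_eval_zero, norm_eval_eq_mul_prod_roots]
  refine le_mul_of_one_le_right (norm_nonneg _) (Multiset.one_le_prod fun x hx => ?_)
  obtain ⟨a, ha, rfl⟩ := Multiset.mem_map.1 hx
  rw [zero_sub, norm_neg]
  exact one_le_norm_of_mem_roots hP ha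

lemma coeff_sub_C_mul_conjReflect_self_ne_zero (hdeg : P.natDegree = n)
    (hP : ∀ z : ℂ, ‖z‖ < 1 → P.eval z ≠ 0) {μ : ℂ} (hμ : 1 < ‖μ‖) :
    (P - C μ * conjReflect n P).coeff n ≠ 0 := by
  rw [coeff_sub, coeff_C_mul, coeff_conjReflect_self, sub_ne_zero]
  refine ne_of_apply_ne norm (ne_of_lt ?_)
  rw [norm_mul, norm_conj, ← hdeg]
  calc ‖P.leadingCoeff‖ ≤ ‖P.coeff 0‖ := norm_leadingCoeff_le_norm_coeff_zero hP
    _ < ‖μ‖ * ‖P.coeff 0‖ :=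
      lt_mul_of_one_lt_left (norm_pos_iff.2 (coeff_zero_ne_zero_of_eval_ne_zero hP)) hμ

lemma eval_sub_C_mul_conjReflect_ne_zero (hdeg : P.natDegree = n)
    (hP : ∀ z : ℂ, ‖z‖ < 1 → P.eval z ≠ 0) {μ : ℂ} (hμ : 1 < ‖μ‖) {w : ℂ} (hw : 1 < ‖w‖) :
    (P - C μ * conjReflect n P).eval w ≠ 0 := by
  rw [eval_sub, eval_mul, eval_C, sub_ne_zero]
  intro hPw
  have hle := norm_eval_le_norm_eval_conjReflect hdeg hP hw.le
  rw [hPw, norm_mul] at hle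
  have hstar := norm_pos_iff.2 (eval_conjReflect_ne_zero hdeg.le hP hw)
  exact (lt_mul_of_one_lt_left hstar hμ).not_ge hle

lemma norm_eval_add_mul_eval_le_conjReflect (hdeg : P.natDegree = n)
    (hP : ∀ z : ℂ, ‖z‖ < 1 → P.eval z ≠ 0) {r R : ℝ} (hr : 1 ≤ r) (hrR : r < R) {z : ℂ}
    (hz : 1 ≤ ‖z‖) {φ : ℂ} (hφ : ‖φ‖ < ((R + 1) / (r + 1)) ^ n) :
    ‖P.eval (R * z) + φ * P.eval (r * z)‖ ≤
      ‖(conjReflect n P).eval (R * z) + φ * (conjReflect n P).eval (r * z)‖ := by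
  have hdeg_star : (conjReflect n P).natDegree = n :=
    natDegree_eq_of_le_of_coeff_ne_zero (natDegree_conjReflect_le hdeg.le) (by
      rw [coeff_conjReflect_self, map_ne_zero_iff _ (RingHom.injective _)]
      exact coeff_zero_ne_zero_of_eval_ne_zero hP)
  have hB := eval_add_mul_eval_ne_zero (fun _ => eval_conjReflect_ne_zero hdeg.le hP) hr hrR hz
    (hdeg_star ▸ hφ)
  set A := P.eval (R * z) + φ * P.eval (r * z)
  set B := (conjReflect n P).eval (R * z) + φ * (conjReflect n P).eval (r * z)
  by_contra! hlt
  set μ := A / B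
  have hμ : 1 < ‖μ‖ := by rwa [norm_div, one_lt_div (norm_pos_iff.2 hB)]
  have hdeg_sub : (P - C μ * conjReflect n P).natDegree = n :=
    natDegree_eq_of_le_of_coeff_ne_zero
      ((natDegree_sub_le_of_le hdeg.le
        ((natDegree_C_mul_le _ _).trans (natDegree_conjReflect_le hdeg.le))).trans (max_self n).le)
      (coeff_sub_C_mul_conjReflect_self_ne_zero hdeg hP hμ)
  refine eval_add_mul_eval_ne_zero (fun _ => eval_sub_C_mul_conjReflect_ne_zero hdeg hP hμ)
    hr hrR hz (hdeg_sub ▸ hφ) ?_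
  simp only [eval_sub, eval_mul, eval_C]
  linear_combination -(div_mul_cancel₀ A hB)

end conjReflect

lemma norm_mul_sub_sub_le {α β : ℂ} {K : ℝ} (hα : ‖α‖ ≤ 1) (hβ : ‖β‖ ≤ 1) (hK : 1 ≤ K) :
    ‖β * ((K : ℂ) - ‖α‖) - α‖ ≤ K := by
  have hKα : 0 ≤ K - ‖α‖ := by linarith
  calc ‖β * ((K : ℂ) - ‖α‖) - α‖ ≤ ‖β‖ * (K - ‖α‖) + ‖α‖ := by
        rw [← ofReal_sub]
        refine (norm_sub_le _ _).trans_eq ?_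
        rw [norm_mul, norm_real, Real.norm_of_nonneg hKα]
    _ ≤ K := by nlinarith

theorem stmt_14 (P : Polynomial ℂ) (n : ℕ) (hdeg : P.natDegree = n)
    (hnz : ∀ z : ℂ, ‖z‖ < 1 → P.eval z ≠ 0)
    (Pstar : Polynomial ℂ)
    (hPstar : Pstar = Polynomial.reflect n (P.map (starRingEnd ℂ)))
    (R r : ℝ) (hr : 1 ≤ r) (hRr : r < R)
    (α β : ℂ) (hα : ‖α‖ ≤ 1) (hβ : ‖β‖ ≤ 1)
    (φ : ℂ) (hφ : φ = β * ((((R + 1) / (r + 1)) ^ n : ℝ) - ‖α‖) - α) :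
    ∀ z : ℂ, 1 ≤ ‖z‖ →
      ‖P.eval ((R : ℂ) * z) + φ * P.eval ((r : ℂ) * z)‖ ≤
        ‖Pstar.eval ((R : ℂ) * z) + φ * Pstar.eval ((r : ℂ) * z)‖ := by
  intro z hz
  set K := ((R + 1) / (r + 1)) ^ n
  have hK : 1 ≤ K := one_le_pow₀ ((one_le_div (by linarith)).2 (by linarith))
  have hφK : φ ∈ closure (ball 0 K) := by
    rw [closure_ball _ (by positivity), mem_closedBall_zero_iff, hφ]
    exact norm_mul_sub_sub_le hα hβ hK
  have hclosed : IsClosed {ψ : ℂ | ‖P.eval (R * z) + ψ * P.eval (r * z)‖ ≤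
      ‖Pstar.eval (R * z) + ψ * Pstar.eval (r * z)‖} :=
    isClosed_le (by fun_prop) (by fun_prop)
  refine hclosed.closure_subset_iff.2 (fun ψ hψ => ?_) hφK
  rw [hPstar]
  exact norm_eval_add_mul_eval_le_conjReflect hdeg hnz hr hRr hz (mem_ball_zero_iff.1 hψ)
end

section
/- Let P be a complex polynomial of degree n with all zeros in the closed unit disk, λ₀, λ₁, λ₂ ∈ ℂ such that every zero of u(z) = λ₀ + C(n,1)λ₁ z + C(n,2)λ₂ z² lies in the half-plane |z| ≤ |z − n/2|, and define B[P](z) = λ₀P(z) + λ₁(nz/2)P′(z) + λ₂(nz/2)²P″(z)/2. If additionally all zeros of P lie in the open unit disk, then B[P] is not identically zero and all zeros of B[P] lie in the closed unit disk. -/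
/-!
For `‖z‖ > 1` put `y_r = (n/2) z / (z - r)` for the zeros `r` of `P`. Then
`B[P](z) = P(z) (λ₀ + λ₁ e₁(y) + λ₂ e₂(y))`, and `Re y_r > n/4` because `‖r‖ < ‖z‖`.
The second factor is the symmetric multi-affine polarization of `u`, so the claim is the quadratic
case of the Grace–Walsh–Szegő coincidence theorem for the half-plane `Re w > n/4`, which contains
no zero of `u`. That case follows by factoring `u` and applying Laguerre's theorem on polar
derivatives twice to the polynomial `p` whose zeros are the `1 / (y_r - n/4)`: the value at `0` of
the result is a nonzero multiple of the polarization. Finally `B[P] ≠ 0` because `B[P](2) ≠ 0`.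
-/

open Polynomial Complex ComplexConjugate

namespace Complex

theorem re_multiset_sum (s : Multiset ℂ) : s.sum.re = (s.map re).sum :=
  map_multiset_sum reAddGroupHom s

theorem card_mul_lt_re_multiset_sum {s : Multiset ℂ} {ρ : ℝ} (hs : s ≠ 0)
    (h : ∀ a ∈ s, ρ < a.re) : Multiset.card s * ρ < s.sum.re := by
  simpa [re_multiset_sum, Multiset.map_const', Multiset.sum_replicate] using
    Multiset.sum_lt_sum_of_nonempty (f := fun _ => ρ) (g := re) hs h

theorem re_le_half_of_norm_le_norm_sub {w : ℂ} {r : ℝ} (hr : 0 < r) (h : ‖w‖ ≤ ‖w - r‖) :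
    w.re ≤ r / 2 := by
  have := pow_le_pow_left₀ (norm_nonneg w) h 2
  simp only [Complex.sq_norm, normSq_apply, sub_re, sub_im, ofReal_re, ofReal_im] at this
  nlinarith

theorem one_half_lt_re_div_sub {z r : ℂ} (h : ‖r‖ < ‖z‖) : 1 / 2 < (z / (z - r)).re := by
  have hzr : z - r ≠ 0 := fun h' => h.ne (by rw [sub_eq_zero.1 h'])
  have hsq : normSq r < normSq z := by
    simpa only [Complex.sq_norm] using pow_lt_pow_left₀ h (norm_nonneg r) two_ne_zero
  rw [div_re, ← add_div, lt_div_iff₀ (normSq_pos.2 hzr)]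
  simp only [normSq_apply, sub_re, sub_im] at hsq ⊢
  nlinarith

theorem exists_vieta {a b c : ℂ} (ha : a ≠ 0) :
    ∃ w₁ w₂ : ℂ, b = -(a * (w₁ + w₂)) ∧ c = a * (w₁ * w₂) := by
  obtain ⟨s, hs⟩ := IsAlgClosed.exists_pow_nat_eq (b ^ 2 - 4 * a * c) two_pos
  refine ⟨(-b + s) / (2 * a), (-b - s) / (2 * a), ?_, ?_⟩
  · field_simp
    ring
  · field_simp
    linear_combination hs

end Complex

namespace Polynomial

section Field

variable {K : Type*} [Field K]

theorem eval_derivative_derivative_multiset_prod_X_sub_C {s : Multiset K} {x : K} (hx : x ∉ s) :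
    eval x (derivative (derivative (s.map fun r => X - C r).prod)) =
      eval x (s.map fun r => X - C r).prod *
        ((s.map fun r => (x - r)⁻¹).sum ^ 2 - (s.map fun r => (x - r)⁻¹ ^ 2).sum) := by
  induction s using Multiset.induction_on with
  | empty => simp
  | cons a s ih =>
    have hxa : x - a ≠ 0 := sub_ne_zero.2 fun h => hx (h ▸ Multiset.mem_cons_self _ _)
    have hxs : x ∉ s := fun h => hx (Multiset.mem_cons_of_mem h)
    have hg : (s.map fun r => X - C r).prod.eval x ≠ 0 := by
      simpa [eval_multiset_prod, Multiset.prod_eq_zero_iff, sub_eq_zero] using hxs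
    have hg' := (Splits.multisetProd (by simp [Splits.X_sub_C])).eval_derivative_eq_eval_mul_sum hg
    rw [roots_multiset_prod_X_sub_C] at hg'
    rw [Multiset.map_cons, Multiset.prod_cons, derivative_mul, derivative_add, derivative_mul,
      derivative_mul, derivative_X_sub_C, derivative_one]
    simp only [Multiset.map_cons, Multiset.sum_cons, eval_add, eval_mul, eval_sub, eval_X, eval_C,
      eval_one, eval_zero, ih hxs, hg', one_div]
    field_simp
    ring

theorem Splits.eval_derivative_eq_eval_mul_sum_inv {f : K[X]} (hf : f.Splits) {x : K}
    (hx : f.eval x ≠ 0) :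
    eval x (derivative f) = eval x f * (f.roots.map fun r => (x - r)⁻¹).sum := by
  simpa only [one_div] using hf.eval_derivative_eq_eval_mul_sum hx

theorem Splits.eval_derivative_derivative_eq_eval_mul {f : K[X]} (hf : f.Splits) {x : K}
    (hx : f.eval x ≠ 0) :
    eval x (derivative (derivative f)) = eval x f *
      ((f.roots.map fun r => (x - r)⁻¹).sum ^ 2 - (f.roots.map fun r => (x - r)⁻¹ ^ 2).sum) := by
  have hxr : x ∉ f.roots := fun h => hx (isRoot_of_mem_roots h)
  conv_lhs => rw [hf.eq_prod_roots, derivative_C_mul, derivative_C_mul, eval_mul, eval_C,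
    eval_derivative_derivative_multiset_prod_X_sub_C hxr, ← mul_assoc, ← eval_C_mul,
    ← hf.eq_prod_roots]

theorem Splits.eval_eq_eval_mul_polarization {f : K[X]} (hf : f.Splits) {x : K}
    (hx : f.eval x ≠ 0) (a₀ a₁ a₂ k : K) :
    eval x (C a₀ * f + C (a₁ * k) * (X * derivative f) +
        C (a₂ * k ^ 2 / 2) * (X ^ 2 * derivative (derivative f))) =
      eval x f * (a₀ + a₁ * (f.roots.map fun r => k * x * (x - r)⁻¹).sum +
        a₂ / 2 * ((f.roots.map fun r => k * x * (x - r)⁻¹).sum ^ 2 -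
          ((f.roots.map fun r => k * x * (x - r)⁻¹).map (· ^ 2)).sum)) := by
  simp only [eval_add, eval_mul, eval_C, eval_X, eval_pow,
    hf.eval_derivative_eq_eval_mul_sum_inv hx, hf.eval_derivative_derivative_eq_eval_mul hx,
    Multiset.map_map, Function.comp_def, mul_pow, Multiset.sum_map_mul_left]
  ring

end Field

section PolarDeriv

variable {R : Type*} [CommRing R]

/-- For `c ≠ 0` this is `c • D_α q` for the polar derivative `D_α q = m q + (α - X) q'` of `q`,
viewed as a polynomial of degree `m`, with respect to `α = -c⁻¹`; for `c = 0` it is `-q'`, the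
polar derivative with respect to `∞`. -/
noncomputable def polarDeriv (m : ℕ) (c : R) (q : R[X]) : R[X] :=
  C (m * c) * q - (1 + C c * X) * derivative q

theorem coeff_polarDeriv (m k : ℕ) (c : R) (q : R[X]) :
    (polarDeriv m c q).coeff k = (m - k) * c * q.coeff k - (k + 1) * q.coeff (k + 1) := by
  rcases k with _ | k
  · simp [polarDeriv, coeff_derivative]
  · simp [polarDeriv, coeff_derivative, add_mul, mul_assoc, coeff_X_mul]
    ring

theorem natDegree_polarDeriv_le {m : ℕ} (c : R) {q : R[X]} (hq : q.natDegree ≤ m) :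
    (polarDeriv m c q).natDegree ≤ m - 1 := by
  refine natDegree_le_iff_coeff_eq_zero.2 fun k hk => ?_
  rw [coeff_polarDeriv, coeff_eq_zero_of_natDegree_lt (by omega : q.natDegree < k + 1)]
  rcases (by omega : k = m ∨ m < k) with rfl | hmk
  · simp
  · simp [coeff_eq_zero_of_natDegree_lt (hq.trans_lt hmk)]

theorem polarDeriv_zero (m : ℕ) (q : R[X]) : polarDeriv m 0 q = -derivative q := by
  simp [polarDeriv]

theorem eval_zero_polarDeriv_polarDeriv (m : ℕ) (c₁ c₂ : R) (p : R[X]) :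
    (polarDeriv m c₂ (polarDeriv (m + 1) c₁ p)).eval 0 =
      (m + 1) * m * c₁ * c₂ * p.eval 0 - m * (c₁ + c₂) * (derivative p).eval 0 +
        (derivative (derivative p)).eval 0 := by
  simp only [polarDeriv, derivative_sub, derivative_mul, derivative_add, derivative_one,
    derivative_C, derivative_X, eval_sub, eval_mul, eval_add, eval_one, eval_C, eval_X,
    eval_zero, Nat.cast_add, Nat.cast_one]
  ring

end PolarDeriv

theorem laguerre_term_re_pos {b c w : ℂ} (hb : 0 < b.re) (hc : 0 ≤ c.re) (hw : w.re ≤ 0)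
    (hcw : 1 + c * w ≠ 0) : 0 < ((1 - conj c * w) * ((1 + c * b) / (b - w))).re := by
  have hbw : b - w ≠ 0 := fun h => by
    rw [sub_eq_zero] at h
    rw [h] at hb
    linarith
  have key : ((1 - conj c * w) * (1 + c * b) * conj (b - w)).re =
      b.re * normSq (1 + c * w) - w.re * normSq (1 + c * b) + c.re * normSq (b - w) := by
    simp only [mul_re, mul_im, normSq_apply, sub_re, sub_im, add_re, add_im, one_re, one_im,
      conj_re, conj_im]
    ring
  rw [← mul_div_assoc, div_eq_mul_inv, inv_def, ← mul_assoc, re_mul_ofReal, key]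
  have h₁ := normSq_pos.2 hcw
  have h₂ := normSq_nonneg (1 + c * b)
  have h₃ := normSq_nonneg (b - w)
  exact mul_pos (by nlinarith) (inv_pos.2 (normSq_pos.2 hbw))

theorem laguerre_sum_ne_zero {s : Multiset ℂ} (hs : s ≠ 0) (hsre : ∀ b ∈ s, 0 < b.re) {c w : ℂ}
    (hc : 0 ≤ c.re) (hw : w.re ≤ 0) (hcw : 1 + c * w ≠ 0) (k : ℕ) :
    (s.map fun b => (1 + c * b) / (b - w)).sum + k * c ≠ 0 := by
  intro h
  have hterms : 0 < (s.map fun b => ((1 - conj c * w) * ((1 + c * b) / (b - w))).re).sum := by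
    simpa using Multiset.sum_lt_sum_of_nonempty (f := fun _ => (0 : ℝ)) hs fun b hb =>
      laguerre_term_re_pos (hsre b hb) hc hw hcw
  have hlast : ((1 - conj c * w) * (k * c)).re = k * (c.re - w.re * normSq c) := by
    simp only [mul_re, mul_im, sub_re, sub_im, one_re, one_im, natCast_re, natCast_im,
      conj_re, conj_im, normSq_apply]
    ring
  have hlast_nonneg : 0 ≤ c.re - w.re * normSq c := by nlinarith [normSq_nonneg c]
  have := congrArg (fun z => ((1 - conj c * w) * z).re) h
  simp only [mul_add, add_re, ← Multiset.sum_map_mul_left, re_multiset_sum, Multiset.map_map,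
    Function.comp_def, hlast, mul_zero, zero_re] at this
  nlinarith [Nat.cast_nonneg (α := ℝ) k]

/-- Laguerre's theorem on polar derivatives, for the open right half-plane. -/
theorem eval_polarDeriv_ne_zero {m : ℕ} (hm : 0 < m) {c : ℂ} (hc : 0 ≤ c.re) {q : ℂ[X]}
    (hqm : q.natDegree ≤ m) (hroots : ∀ b, q.IsRoot b → 0 < b.re)
    (hqc : 0 < q.natDegree ∨ c ≠ 0) {w : ℂ} (hw : w.re ≤ 0) :
    (polarDeriv m c q).eval w ≠ 0 := by
  have hqw : q.eval w ≠ 0 := fun h => (hroots w h).not_ge hw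
  have hsplit := IsAlgClosed.splits q
  set S := (q.roots.map fun b => (w - b)⁻¹).sum
  have heval : (polarDeriv m c q).eval w = q.eval w * (m * c - (1 + c * w) * S) := by
    simp only [polarDeriv, eval_sub, eval_mul, eval_C, eval_add, eval_one, eval_X,
      hsplit.eval_derivative_eq_eval_mul_sum_inv hqw, S]
    ring
  rw [heval]
  refine mul_ne_zero hqw ?_
  by_cases hcw : 1 + c * w = 0
  · have hc0 : c ≠ 0 := by rintro rfl; simp at hcw
    simpa [hcw] using ⟨hm.ne', hc0⟩
  rcases eq_or_ne q.roots 0 with h0 | hne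
  · have hc0 : c ≠ 0 := hqc.resolve_left (by simp [hsplit.natDegree_eq_card_roots, h0])
    simpa [S, h0] using ⟨hm.ne', hc0⟩
  have hd : Multiset.card q.roots ≤ m := hsplit.natDegree_eq_card_roots ▸ hqm
  have hterm : ∀ b ∈ q.roots, (1 + c * b) / (b - w) = c - (1 + c * w) * (w - b)⁻¹ := by
    intro b hb
    have : w - b ≠ 0 := sub_ne_zero.2 fun h => hqw (h ▸ isRoot_of_mem_roots hb)
    have : b - w ≠ 0 := fun h => this (by linear_combination -h)
    field_simp
    ring
  have hsum : (m : ℂ) * c - (1 + c * w) * S =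
      (q.roots.map fun b => (1 + c * b) / (b - w)).sum + (m - Multiset.card q.roots : ℕ) * c := by
    rw [Multiset.map_congr rfl hterm, Multiset.sum_map_sub, Multiset.sum_map_mul_left,
      Multiset.map_const', Multiset.sum_replicate, nsmul_eq_mul, Nat.cast_sub hd]
    ring
  rw [hsum]
  exact laguerre_sum_ne_zero hne (fun b hb => hroots b (isRoot_of_mem_roots hb)) hc hw hcw _

theorem eval_zero_polarDeriv_polarDeriv_ne_zero {m : ℕ} (hm : 0 < m) {p : ℂ[X]}
    (hp : p.natDegree = m + 1) (hroots : ∀ b, p.IsRoot b → 0 < b.re) {c₁ c₂ : ℂ}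
    (hc₁ : 0 ≤ c₁.re) (hc₂ : 0 ≤ c₂.re) (hc : c₂ ≠ 0 ∨ c₁ = 0) :
    (polarDeriv m c₂ (polarDeriv (m + 1) c₁ p)).eval 0 ≠ 0 := by
  have hq : ∀ w : ℂ, w.re ≤ 0 → (polarDeriv (m + 1) c₁ p).eval w ≠ 0 := fun w hw =>
    eval_polarDeriv_ne_zero m.succ_pos hc₁ hp.le hroots (Or.inl (by omega)) hw
  refine eval_polarDeriv_ne_zero hm hc₂ (natDegree_polarDeriv_le c₁ hp.le)
    (fun b hb => not_le.1 fun h => hq b h hb) ?_ (by simp)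
  rcases hc with hc₂ | rfl
  · exact Or.inr hc₂
  · simp [polarDeriv_zero, hp, hm]

end Polynomial

theorem polarization_ne_zero_of_re_pos {n : ℕ} (hn : 2 ≤ n) {x : Multiset ℂ}
    (hx : Multiset.card x = n) (hxre : ∀ a ∈ x, 0 < a.re) {c₁ c₂ : ℂ} (hc₁ : 0 ≤ c₁.re)
    (hc₂ : 0 ≤ c₂.re) :
    n * (n - 1) * c₁ * c₂ + (n - 1) * (c₁ + c₂) * x.sum + (x.sum ^ 2 - (x.map (· ^ 2)).sum) ≠
      0 := by
  -- with `c₂ = 0` the inner polar derivative must be the nonconstant `-p'`, so swap if needed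
  wlog hc : c₂ ≠ 0 ∨ c₁ = 0 generalizing c₁ c₂
  · rw [not_or, not_ne_iff] at hc
    convert this hc₂ hc₁ (Or.inl hc.2) using 1
    ring
  obtain ⟨m, rfl⟩ : ∃ m, n = m + 1 := ⟨n - 1, by omega⟩
  set p := ((x.map (·⁻¹)).map fun b => X - C b).prod
  have hrootsp : p.roots = x.map (·⁻¹) := roots_multiset_prod_X_sub_C _
  have hroots : ∀ b, p.IsRoot b → 0 < b.re := by
    intro b hb
    have hp0 : p ≠ 0 := (monic_multiset_prod_of_monic _ _ fun _ _ => monic_X_sub_C _).ne_zero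
    obtain ⟨a, ha, rfl⟩ := Multiset.mem_map.1 (hrootsp ▸ (mem_roots hp0).2 hb)
    have := hxre a ha
    rw [inv_re]
    exact div_pos this (normSq_pos.2 fun h => by simp [h] at this)
  have hp : p.natDegree = m + 1 := by
    rw [natDegree_multiset_prod_X_sub_C_eq_card, Multiset.card_map, hx]
  have hp0 : p.eval 0 ≠ 0 := fun h => (hroots 0 h).false
  have hsplit : p.Splits := IsAlgClosed.splits p
  have h₁ : (derivative p).eval 0 = p.eval 0 * -x.sum := by
    rw [hsplit.eval_derivative_eq_eval_mul_sum_inv hp0, hrootsp, Multiset.map_map]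
    simp [Multiset.sum_map_neg']
  have h₂ : (derivative (derivative p)).eval 0 =
      p.eval 0 * (x.sum ^ 2 - (x.map (· ^ 2)).sum) := by
    rw [hsplit.eval_derivative_derivative_eq_eval_mul hp0, hrootsp, Multiset.map_map,
      Multiset.map_map]
    simp [Multiset.sum_map_neg']
  have := eval_zero_polarDeriv_polarDeriv_ne_zero (by omega) hp hroots hc₁ hc₂ hc
  rw [eval_zero_polarDeriv_polarDeriv, h₁, h₂] at this
  intro hQ
  apply this
  push_cast at hQ
  linear_combination p.eval 0 * hQ

theorem polarization_ne_zero_of_re_lt {n : ℕ} (hn : 2 ≤ n) {ρ : ℝ} {y : Multiset ℂ}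
    (hy : Multiset.card y = n) (hyre : ∀ a ∈ y, ρ < a.re) {w₁ w₂ : ℂ} (hw₁ : w₁.re ≤ ρ)
    (hw₂ : w₂.re ≤ ρ) :
    n * (n - 1) * w₁ * w₂ - (n - 1) * (w₁ + w₂) * y.sum + (y.sum ^ 2 - (y.map (· ^ 2)).sum) ≠
      0 := by
  have hx₁ : (y.map (· - (ρ : ℂ))).sum = y.sum - n * ρ := by
    rw [Multiset.sum_map_sub, Multiset.map_id', Multiset.map_const', Multiset.sum_replicate, hy,
      nsmul_eq_mul]
  have hsq : (y.map (· - (ρ : ℂ))).map (· ^ 2) = y.map fun a : ℂ => a ^ 2 - 2 * ρ * a + ρ ^ 2 := by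
    rw [Multiset.map_map]
    exact Multiset.map_congr rfl fun a _ => by simp only [Function.comp_apply]; ring
  have hx₂ : ((y.map (· - (ρ : ℂ))).map (· ^ 2)).sum =
      (y.map (· ^ 2)).sum - 2 * ρ * y.sum + n * ρ ^ 2 := by
    rw [hsq, Multiset.sum_map_add, Multiset.sum_map_sub, Multiset.sum_map_mul_left,
      Multiset.map_id', Multiset.map_const', Multiset.sum_replicate, hy, nsmul_eq_mul]
  have := polarization_ne_zero_of_re_pos hn (x := y.map (· - (ρ : ℂ))) (by simp [hy])
    (by simpa using fun a ha => hyre a ha) (c₁ := ρ - w₁) (c₂ := ρ - w₂)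
    (by simpa using hw₁) (by simpa using hw₂)
  rw [hx₁, hx₂] at this
  convert this using 1
  ring

theorem quadratic_polarization_ne_zero {n : ℕ} (hn : 1 ≤ n) {a₀ a₁ a₂ : ℂ} {ρ : ℝ}
    (hu : ∀ w : ℂ, a₀ + n.choose 1 * a₁ * w + n.choose 2 * a₂ * w ^ 2 = 0 → w.re ≤ ρ)
    {y : Multiset ℂ} (hy : Multiset.card y = n) (hyre : ∀ a ∈ y, ρ < a.re) :
    a₀ + a₁ * y.sum + a₂ / 2 * (y.sum ^ 2 - (y.map (· ^ 2)).sum) ≠ 0 := by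
  rw [Nat.choose_one_right, Nat.cast_choose_two] at hu
  have hn0 : (n : ℂ) ≠ 0 := Nat.cast_ne_zero.2 (by omega)
  rcases eq_or_ne ((n : ℂ) * (n - 1) / 2 * a₂) 0 with hK | hK
  · have hquad : a₂ / 2 * (y.sum ^ 2 - (y.map (· ^ 2)).sum) = 0 := by
      rcases mul_eq_zero.1 hK with h | rfl
      · obtain ⟨a, rfl⟩ : ∃ a, y = {a} := Multiset.card_eq_one.1 (by
          rw [hy]; exact_mod_cast (by simpa [hn0, sub_eq_zero] using h : (n : ℂ) = 1))
        simp
      · simp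
    rw [hquad, add_zero]
    -- without a quadratic term the polarization is `u` at the mean of `y`
    intro h
    have hlin : (n : ℂ) * a₁ * (y.sum / n) = a₁ * y.sum := by field_simp
    have hmean := hu (y.sum / n) (by linear_combination h + hlin + (y.sum / n) ^ 2 * hK)
    rw [div_natCast_re, div_le_iff₀ (by positivity)] at hmean
    have := card_mul_lt_re_multiset_sum (fun h => by simp [h] at hy; omega) hyre
    rw [hy] at this
    linarith
  · obtain ⟨w₁, w₂, hb, hc⟩ := exists_vieta hK (b := n * a₁) (c := a₀)
    have hn2 : 2 ≤ n := by
      by_contra h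
      obtain rfl : n = 1 := by omega
      simp at hK
    have := polarization_ne_zero_of_re_lt hn2 hy hyre (hu w₁ (by linear_combination hc + w₁ * hb))
      (hu w₂ (by linear_combination hc + w₂ * hb))
    intro h
    refine this ((mul_eq_zero.1 ?_).resolve_left hK)
    linear_combination (n * (n - 1) : ℂ) * h - (n * (n - 1) : ℂ) * hc - (n - 1 : ℂ) * y.sum * hb

theorem stmt_19 (P : Polynomial ℂ) (n : ℕ) (hn : 1 ≤ n) (hdeg : P.natDegree = n)
    (lam0 lam1 lam2 : ℂ)
    (hu : ∀ w : ℂ,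
      lam0 + (n.choose 1 : ℂ) * lam1 * w + (n.choose 2 : ℂ) * lam2 * w ^ 2 = 0 →
      ‖w‖ ≤ ‖w - (n : ℂ) / 2‖)
    (B : Polynomial ℂ)
    (hB : B = Polynomial.C lam0 * P +
      Polynomial.C (lam1 * ((n : ℂ) / 2)) * (Polynomial.X * P.derivative) +
      Polynomial.C (lam2 * ((n : ℂ) / 2) ^ 2 / 2) *
        (Polynomial.X ^ 2 * P.derivative.derivative))
    (hroots : ∀ w : ℂ, P.eval w = 0 → ‖w‖ < 1) :
    B ≠ 0 ∧ ∀ z : ℂ, B.eval z = 0 → ‖z‖ ≤ 1 := by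
  have hn' : (0 : ℝ) < n := by exact_mod_cast hn
  have hu' : ∀ w : ℂ, lam0 + n.choose 1 * lam1 * w + n.choose 2 * lam2 * w ^ 2 = 0 →
      w.re ≤ (n / 4 : ℝ) := fun w hw => by
    have := re_le_half_of_norm_le_norm_sub (r := n / 2) (by positivity) (by simpa using hu w hw)
    linarith
  have hBz : ∀ z : ℂ, 1 < ‖z‖ → B.eval z ≠ 0 := by
    intro z hz
    have hPz : P.eval z ≠ 0 := fun h => (hroots z h).not_gt hz
    have hsplit := IsAlgClosed.splits P
    rw [hB, hsplit.eval_eq_eval_mul_polarization hPz]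
    refine mul_ne_zero hPz (quadratic_polarization_ne_zero hn hu' ?_ ?_)
    · rw [Multiset.card_map, ← hsplit.natDegree_eq_card_roots, hdeg]
    · intro a ha
      obtain ⟨r, hr, rfl⟩ := Multiset.mem_map.1 ha
      have := one_half_lt_re_div_sub ((hroots r (isRoot_of_mem_roots hr)).trans hz)
      rw [mul_assoc, ← div_eq_mul_inv, (by push_cast; ring : (n : ℂ) / 2 = (n / 2 : ℝ)),
        re_ofReal_mul]
      nlinarith
  exact ⟨fun h => hBz 2 (by norm_num) (by simp [h]), fun z hz => not_lt.1 fun h => hBz z h hz⟩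
end
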